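/- Let f be a concave size function, let β ≥ 0, and let (U, A, w_β) be the flow network constructed from G, f, and β. If (X, Y) is a minimum s–t cut of (U, A, w_β) and S = X ∩ V, then the cost of (X, Y) equals w(V) + β·f(|S|) − w(S). Consequently, the minimum s–t cut cost of (U, A, w_β) equals w(V) + min_{S⊆V} ( β·f(|S|) − w(S) ). -/

import Mathlib

structure WGraph (V : Type) [Fintype V] [DecidableEq V] where
  E : Finset (Sym2 V)
  not_diag : ∀ e ∈ E, ¬ e.IsDiag
  w : Sym2 V → ℝ
  w_pos : ∀ e ∈ E, 0 < w e

variable {V : Type} [Fintype V] [DecidableEq V]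

def WGraph.wS (G : WGraph V) (S : Finset V) : ℝ :=
  ∑ e ∈ G.E.filter (fun e => e ∈ S.sym2), G.w e

def WGraph.deg (G : WGraph V) (S : Finset V) (v : V) : ℝ :=
  ∑ u ∈ S.filter (fun u => s(u, v) ∈ G.E), G.w s(u, v)

def acoef (f : ℕ → ℝ) (n : ℕ) (k : ℕ) : ℝ :=
  if k = n then f n - f (n - 1) else 2 * f k - f (k + 1) - f (k - 1)

noncomputable def netW (G : WGraph V) (f : ℕ → ℝ) (β : ℝ) :
    ((V ⊕ Fin (Fintype.card V)) ⊕ Bool) → ((V ⊕ Fin (Fintype.card V)) ⊕ Bool) → ℝ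
  | .inr true, .inl (.inl v) => G.deg Finset.univ v / 2
  | .inl (.inl u), .inl (.inl v) => if s(u, v) ∈ G.E then G.w s(u, v) / 2 else 0
  | .inl (.inl _), .inl (.inr k) => β * acoef f (Fintype.card V) (k.1 + 1)
  | .inl (.inr k), .inr false => β * ((k.1 : ℝ) + 1) * acoef f (Fintype.card V) (k.1 + 1)
  | _, _ => 0

noncomputable def cutCost (G : WGraph V) (f : ℕ → ℝ) (β : ℝ)
    (X : Finset ((V ⊕ Fin (Fintype.card V)) ⊕ Bool)) : ℝ :=
  ∑ u ∈ X, ∑ v ∈ Xᶜ, netW G f β u v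

/-!
Write the source side of a cut as `{s} ∪ S ∪ {p_k | k ∈ K}` with `S ⊆ V`. Its cost splits into
a graph part `Σ_{v ∉ S} d(v)/2 + w(S, V ∖ S)/2 = w(V) - w(S)` and the level part
`β (|S| Σ_{k ∉ K} a_k + Σ_{k ∈ K} k a_k)`. Telescoping gives `f(s) - f(0) = Σ_k min(k, s) a_k`,
so, as `a_k ≥ 0`, the level part is at least `β f(|S|)`, with equality for `K = {k | k ≤ |S|}`.
A minimum cut is thus no cheaper than its own bound and no dearer than these canonical cuts.
-/

open Finset

lemma Finset.sum_sum_mk_eq_two_nsmul_sum_sym2 {α M : Type*} [DecidableEq α] [AddCommMonoid M]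
    (A : Finset α) (g : Sym2 α → M) (hg : ∀ a, g s(a, a) = 0) :
    ∑ u ∈ A, ∑ v ∈ A, g s(u, v) = 2 • ∑ e ∈ A.sym2, g e := by
  rw [← sum_product' (f := fun u v => g s(u, v)), ← sum_fiberwise_of_maps_to
    (g := fun p => s(p.1, p.2)) (t := A.sym2) (fun p hp => by simpa using hp), smul_sum]
  refine sum_congr rfl fun e he => ?_
  induction e using Sym2.ind with
  | _ a b =>
  by_cases hab : a = b
  · subst hab
    rw [hg, smul_zero]
    refine sum_eq_zero fun p hp => ?_
    rw [(mem_filter.1 hp).2, hg]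
  · rw [mk_mem_sym2_iff] at he
    have hfiber : (A ×ˢ A).filter (fun p => s(p.1, p.2) = s(a, b)) = {(a, b), (b, a)} := by
      ext ⟨u, v⟩
      simp only [mem_filter, mem_product, Sym2.eq_iff, mem_insert, mem_singleton, Prod.mk.injEq]
      aesop
    rw [hfiber, sum_pair (by simp [hab]), Sym2.eq_swap, two_smul]

lemma Finset.compl_disjSum {α β : Type*} [Fintype α] [Fintype β] [DecidableEq α] [DecidableEq β]
    (s : Finset α) (t : Finset β) :
    (s.disjSum t)ᶜ = sᶜ.disjSum tᶜ := by
  ext (a | b) <;> simp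

namespace WGraph

variable (G : WGraph V)

def cut (A B : Finset V) : ℝ :=
  ∑ u ∈ A, ∑ v ∈ B, if s(u, v) ∈ G.E then G.w s(u, v) else 0

lemma cut_comm (A B : Finset V) : G.cut A B = G.cut B A := by
  rw [cut, sum_comm]
  simp only [cut, Sym2.eq_swap]

lemma cut_self (A : Finset V) : G.cut A A = 2 * G.wS A := by
  rw [cut, sum_sum_mk_eq_two_nsmul_sum_sym2 A (fun e => if e ∈ G.E then G.w e else 0)
    fun a => if_neg fun h => G.not_diag _ h (Sym2.mk_isDiag_iff.2 rfl), nsmul_eq_mul, wS,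
    filter_mem_eq_inter, inter_comm, ← filter_mem_eq_inter, sum_filter]
  norm_num

lemma cut_add_cut_compl_left (S B : Finset V) : G.cut S B + G.cut Sᶜ B = G.cut univ B :=
  sum_add_sum_compl S _

lemma cut_add_cut_compl_right (A S : Finset V) : G.cut A S + G.cut A Sᶜ = G.cut A univ := by
  simp only [cut, ← sum_add_distrib, sum_add_sum_compl]

lemma sum_deg_eq_cut (B : Finset V) : ∑ v ∈ B, G.deg univ v = G.cut univ B := by
  rw [cut, sum_comm]
  simp only [deg, sum_filter]

lemma wS_univ_sub_wS (S : Finset V) :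
    G.wS univ - G.wS S = (G.cut univ Sᶜ + G.cut S Sᶜ) / 2 := by
  linarith [G.cut_self univ, G.cut_self S, G.cut_comm Sᶜ S, G.cut_add_cut_compl_left S univ,
    G.cut_add_cut_compl_left S Sᶜ, G.cut_add_cut_compl_right S S, G.cut_add_cut_compl_right Sᶜ S]

end WGraph

section SizeFunction

variable (f : ℕ → ℝ) (n : ℕ)

lemma acoef_nonneg (hmono : Monotone f)
    (hconc : ∀ x : ℕ, f x - 2 * f (x + 1) + f (x + 2) ≤ 0) {k : ℕ} (hk : 1 ≤ k) :
    0 ≤ acoef f n k := by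
  unfold acoef
  split_ifs with hkn
  · linarith [hmono (Nat.sub_le n 1)]
  · obtain ⟨m, rfl⟩ := Nat.exists_eq_add_of_le' hk
    simpa [add_assoc] using (by linarith [hconc m] : 0 ≤ 2 * f (m + 1) - f (m + 2) - f m)

lemma sum_Ico_acoef {j : ℕ} (hj : j < n) :
    ∑ k ∈ Ico j n, acoef f n (k + 1) = f (j + 1) - f j := by
  obtain ⟨m, rfl⟩ : ∃ m, n = m + 1 := ⟨n - 1, by omega⟩
  have hinner : ∀ k ∈ Ico j m, acoef f (m + 1) (k + 1) =
      -((f (k + 1 + 1) - f (k + 1)) - (f (k + 1) - f k)) := by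
    intro k hk
    rw [acoef, if_neg (by simp at hk; omega), Nat.add_sub_cancel]
    ring
  rw [sum_Ico_succ_top (by omega), sum_congr rfl hinner, sum_neg_distrib,
    sum_Ico_sub (fun k => f (k + 1) - f k) (by omega : j ≤ m), acoef, if_pos rfl,
    Nat.add_sub_cancel]
  ring

lemma sum_min_mul_acoef {s : ℕ} (hs : s ≤ n) :
    ∑ k ∈ range n, (min (k + 1) s : ℕ) * acoef f n (k + 1) = f s - f 0 := by
  induction s with
  | zero => simp
  | succ s ih =>
    have hstep : ∀ k ∈ range n, (min (k + 1) (s + 1) : ℕ) * acoef f n (k + 1) =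
        (min (k + 1) s : ℕ) * acoef f n (k + 1) + if s ≤ k then acoef f n (k + 1) else 0 := by
      intro k _
      split_ifs with hsk
      · rw [min_eq_right (by omega), min_eq_right (by omega)]; push_cast; ring
      · rw [min_eq_left (by omega), min_eq_left (by omega)]; ring
    have hIco : (range n).filter (fun k => s ≤ k) = Ico s n := by
      ext k; simp only [mem_filter, mem_range, mem_Ico]; omega
    rw [sum_congr rfl hstep, sum_add_distrib, ih (by omega), ← sum_filter, hIco,
      sum_Ico_acoef f n (by omega)]
    ring

/-- The cost, divided by `β`, of the edges at the level vertices of a cut with `s` vertices of `V`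
and the `p_(k+1)`, `k ∈ K`, on the source side. -/
noncomputable def levelCost (s : ℕ) (K : Finset (Fin n)) : ℝ :=
  s * ∑ k ∈ Kᶜ, acoef f n (k + 1) + ∑ k ∈ K, ((k : ℝ) + 1) * acoef f n (k + 1)

lemma levelCost_sub_eq {s : ℕ} (hs : s ≤ n) (K : Finset (Fin n)) :
    levelCost f n s K - (f s - f 0) =
      ∑ k ∈ K, ((k : ℝ) + 1 - (min (k + 1) s : ℕ)) * acoef f n (k + 1) +
        ∑ k ∈ Kᶜ, ((s : ℝ) - (min (k + 1) s : ℕ)) * acoef f n (k + 1) := by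
  rw [← sum_min_mul_acoef f n hs, ← Fin.sum_univ_eq_sum_range (fun k =>
    (min (k + 1) s : ℕ) * acoef f n (k + 1)), ← sum_add_sum_compl K, levelCost, mul_sum]
  simp only [sub_mul, sum_sub_distrib]
  ring

variable {f n}

lemma sub_le_levelCost (hmono : Monotone f)
    (hconc : ∀ x : ℕ, f x - 2 * f (x + 1) + f (x + 2) ≤ 0) {s : ℕ} (hs : s ≤ n)
    (K : Finset (Fin n)) : f s - f 0 ≤ levelCost f n s K := by
  have hterm {c : ℝ} (k : Fin n) (hc : ((min (k + 1) s : ℕ) : ℝ) ≤ c) :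
      0 ≤ (c - (min (k + 1) s : ℕ)) * acoef f n (k + 1) :=
    mul_nonneg (sub_nonneg.2 hc) (acoef_nonneg f n hmono hconc (by omega))
  have := levelCost_sub_eq f n hs K
  have h1 := sum_nonneg fun k (_ : k ∈ K) =>
    hterm k (c := (k : ℝ) + 1) (by exact_mod_cast min_le_left _ _)
  have h2 := sum_nonneg fun k (_ : k ∈ Kᶜ) =>
    hterm k (c := s) (by exact_mod_cast min_le_right _ _)
  linarith

lemma levelCost_filter_le {s : ℕ} (hs : s ≤ n) :
    levelCost f n s (univ.filter fun k : Fin n => k + 1 ≤ s) = f s - f 0 := by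
  rw [← sub_eq_zero, levelCost_sub_eq f n hs]
  have hK : ∀ k ∈ univ.filter fun k : Fin n => k + 1 ≤ s,
      ((k : ℝ) + 1 - (min (k + 1) s : ℕ)) * acoef f n (k + 1) = 0 := by
    intro k hk
    rw [min_eq_left (by simpa using hk)]
    push_cast; ring
  have hKc : ∀ k ∈ (univ.filter fun k : Fin n => k + 1 ≤ s)ᶜ,
      ((s : ℝ) - (min (k + 1) s : ℕ)) * acoef f n (k + 1) = 0 := by
    intro k hk
    rw [min_eq_right (by simp at hk; omega)]
    ring
  rw [sum_eq_zero hK, sum_eq_zero hKc, add_zero]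

end SizeFunction

/-- The source side `{s} ∪ S ∪ {p_(k+1) | k ∈ K}`; `Sum.inr true` is `s`, `Sum.inr false` is `t`. -/
def sourceSide (S : Finset V) (K : Finset (Fin (Fintype.card V))) :
    Finset ((V ⊕ Fin (Fintype.card V)) ⊕ Bool) :=
  (S.disjSum K).disjSum {true}

lemma cutCost_sourceSide (G : WGraph V) (f : ℕ → ℝ) (β : ℝ) (S : Finset V)
    (K : Finset (Fin (Fintype.card V))) :
    cutCost G f β (sourceSide S K) =
      G.wS univ - G.wS S + β * levelCost f (Fintype.card V) S.card K := by
  have hc : ({true}ᶜ : Finset Bool) = {false} := by decide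
  have hhalf : ∑ u ∈ S, ∑ v ∈ Sᶜ, (if s(u, v) ∈ G.E then G.w s(u, v) / 2 else 0) =
      G.cut S Sᶜ / 2 := by
    simp only [WGraph.cut, sum_div, ite_div, zero_div]
  have hdeg : ∑ v ∈ Sᶜ, G.deg univ v / 2 = G.cut univ Sᶜ / 2 := by
    rw [← sum_div, G.sum_deg_eq_cut]
  simp only [cutCost, sourceSide, compl_disjSum, hc, sum_disjSum, sum_singleton, netW,
    sum_const_zero, add_zero, zero_add, sum_add_distrib, sum_const, nsmul_eq_mul, hhalf, hdeg]
  simp only [G.wS_univ_sub_wS, levelCost, mul_assoc, ← mul_sum]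
  ring

lemma sourceSide_filter_eq (X : Finset ((V ⊕ Fin (Fintype.card V)) ⊕ Bool))
    (hsrc : Sum.inr true ∈ X) (hsink : Sum.inr false ∉ X) :
    sourceSide (univ.filter fun v => Sum.inl (Sum.inl v) ∈ X)
      (univ.filter fun k => Sum.inl (Sum.inr k) ∈ X) = X := by
  ext ((v | k) | b)
  · simp [sourceSide]
  · simp [sourceSide]
  · cases b <;> simp [sourceSide, hsrc, hsink]

theorem stmt18 (G : WGraph V)
    (f : ℕ → ℝ) (hmono : Monotone f) (hf0 : f 0 = 0)
    (hconc : ∀ x : ℕ, f x - 2 * f (x + 1) + f (x + 2) ≤ 0)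
    (β : ℝ) (hβ : 0 ≤ β)
    (X : Finset ((V ⊕ Fin (Fintype.card V)) ⊕ Bool))
    (hsrc : Sum.inr true ∈ X) (hsink : Sum.inr false ∉ X)
    (hmin : ∀ X' : Finset ((V ⊕ Fin (Fintype.card V)) ⊕ Bool),
      Sum.inr true ∈ X' → Sum.inr false ∉ X' → cutCost G f β X ≤ cutCost G f β X') :
    cutCost G f β X =
      G.wS Finset.univ
        + β * f (Finset.univ.filter (fun v : V => Sum.inl (Sum.inl v) ∈ X)).card
        - G.wS (Finset.univ.filter (fun v : V => Sum.inl (Sum.inl v) ∈ X)) ∧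
    ∀ T : Finset V, cutCost G f β X ≤ G.wS Finset.univ + β * f T.card - G.wS T := by
  have hupper (T : Finset V) : cutCost G f β X ≤ G.wS univ + β * f T.card - G.wS T := by
    have hcanon := hmin (sourceSide T (univ.filter fun k => k + 1 ≤ T.card))
      (by simp [sourceSide]) (by simp [sourceSide])
    rw [cutCost_sourceSide, levelCost_filter_le (card_le_univ T), hf0] at hcanon
    linarith
  refine ⟨le_antisymm (hupper _) ?_, hupper⟩
  set S := univ.filter fun v : V => Sum.inl (Sum.inl v) ∈ X
  set K := univ.filter fun k : Fin (Fintype.card V) => Sum.inl (Sum.inr k) ∈ X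
  have hlevel : f S.card ≤ levelCost f (Fintype.card V) S.card K := by
    simpa [hf0] using sub_le_levelCost hmono hconc (card_le_univ S) K
  have hcost := cutCost_sourceSide G f β S K
  rw [sourceSide_filter_eq X hsrc hsink] at hcost
  linarith [mul_le_mul_of_nonneg_left hlevel hβ]
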